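/- Finite-horizon approximation and quadratic growth of the value function. Let (Q_j)_{j∈ℕ⁺} ∈ M_{ħ,≫}(H) and (R_j)_{j∈ℕ⁺} ∈ M_{ħ,≫}(U), and assume U_ad(x_0) ≠ ∅ for every x_0 ∈ H. Then for each ℓ ∈ ℕ there exists K > 0 such that V(x_0;ℓ) ≤ K‖x_0‖_H² for all x_0 ∈ H, and moreover V(x_0;ℓ) = lim_{k→∞} V(x_0;ℓ,k) for every x_0 ∈ H, where V(·;ℓ,k) is the finite-horizon value function with terminal index k, terminal weight M = 0 and the same weights (Q_j), (R_j). -/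

import Mathlib

open scoped RealInnerProductSpace
noncomputable section

namespace ImpulseControl

/-- adjoint of a continuous linear map between real Hilbert spaces -/
def adj {E F : Type*} [NormedAddCommGroup E] [InnerProductSpace ℝ E] [CompleteSpace E]
    [NormedAddCommGroup F] [InnerProductSpace ℝ F] [CompleteSpace F]
    (f : E →L[ℝ] F) : F →L[ℝ] E :=
  ContinuousLinearMap.adjoint f

/-- `ν(j) = j - [j/ħ]·ħ ∈ {1,…,ħ}` (where `[s] = max {k ∈ ℕ : k < s}`):
equals `ħ` when `ħ ∣ j`, else `j % ħ`. -/
def nu (hbar j : ℕ) : ℕ := if j % hbar = 0 then hbar else j % hbar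

variable {H U : Type*} [NormedAddCommGroup H] [InnerProductSpace ℝ H] [CompleteSpace H]
  [NormedAddCommGroup U] [InnerProductSpace ℝ U] [CompleteSpace U]

/-- a bounded self-adjoint nonnegative operator: membership in `SL₊` -/
def IsNonnegOp {E : Type*} [NormedAddCommGroup E] [InnerProductSpace ℝ E] [CompleteSpace E]
    (P : E →L[ℝ] E) : Prop :=
  IsSelfAdjoint P ∧ ∀ x : E, 0 ≤ ⟪P x, x⟫

/-- membership in `SL_≫`: self-adjoint, nonnegative and coercive -/
def IsCoerciveOp {E : Type*} [NormedAddCommGroup E] [InnerProductSpace ℝ E] [CompleteSpace E]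
    (P : E →L[ℝ] E) : Prop :=
  IsNonnegOp P ∧ ∃ δ : ℝ, 0 < δ ∧ ∀ x : E, δ * ‖x‖ ^ 2 ≤ ⟪P x, x⟫

/-- `M_{ħ,+}`: an `ħ`-periodic sequence of self-adjoint nonnegative operators (indices `j ≥ 1`). -/
def MemMPlus {E : Type*} [NormedAddCommGroup E] [InnerProductSpace ℝ E] [CompleteSpace E]
    (hbar : ℕ) (Q : ℕ → E →L[ℝ] E) : Prop :=
  (∀ j : ℕ, 1 ≤ j → IsNonnegOp (Q j)) ∧ ∀ j : ℕ, 1 ≤ j → Q (j + hbar) = Q j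

/-- `M_{ħ,≫}`: an `ħ`-periodic sequence of self-adjoint coercive operators (indices `j ≥ 1`). -/
def MemMCoercive {E : Type*} [NormedAddCommGroup E] [InnerProductSpace ℝ E] [CompleteSpace E]
    (hbar : ℕ) (Q : ℕ → E →L[ℝ] E) : Prop :=
  (∀ j : ℕ, 1 ≤ j → IsCoerciveOp (Q j)) ∧ ∀ j : ℕ, 1 ≤ j → Q (j + hbar) = Q j

section Defs

variable (T : ℝ → H →L[ℝ] H) (t : ℕ → ℝ) (hbar : ℕ) (B : ℕ → U →L[ℝ] H)

/-- post-impulse states: `xplusFrom T t ħ B ℓ x0 u m = x(t_{ℓ+m}^+ ; x0, u, ℓ)`. -/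
def xplusFrom (ℓ : ℕ) (x0 : H) (u : ℕ → U) : ℕ → H
  | 0 => x0
  | m + 1 => T (t (ℓ + m + 1) - t (ℓ + m)) (xplusFrom ℓ x0 u m)
      + B (nu hbar (ℓ + m + 1)) (u (ℓ + m + 1))

/-- pre-impulse states: `xtrajFrom T t ħ B ℓ x0 u m = x(t_{ℓ+m} ; x0, u, ℓ)` for `m ≥ 1`. -/
def xtrajFrom (ℓ : ℕ) (x0 : H) (u : ℕ → U) : ℕ → H
  | 0 => x0
  | m + 1 => T (t (ℓ + m + 1) - t (ℓ + m)) (xplusFrom T t hbar B ℓ x0 u m)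

/-- `x(t_j^+ ; x0, u)` -/
def xplus (x0 : H) (u : ℕ → U) : ℕ → H := xplusFrom T t hbar B 0 x0 u

/-- `x(t_j ; x0, u)` for `j ≥ 1` -/
def xtraj (x0 : H) (u : ℕ → U) : ℕ → H := xtrajFrom T t hbar B 0 x0 u

/-- the shifted admissible control set `U_ad(x0; ℓ)`; `U_ad(x0) = UadFrom T t ħ B 0 x0` -/
def UadFrom (ℓ : ℕ) (x0 : H) : Set (ℕ → U) :=
  {u | Summable (fun j : ℕ => ‖u (ℓ + j + 1)‖ ^ 2) ∧
       Summable (fun j : ℕ => ‖xtrajFrom T t hbar B ℓ x0 u (j + 1)‖ ^ 2)}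

/-- exponential `ħ`-stabilizability of `[A, B_ħ, Λ_ħ]` by an `ħ`-periodic feedback law:
every closed-loop trajectory decays like `C e^{-μ t}`. -/
def ExpStabilizable : Prop :=
  ∃ F : ℕ → H →L[ℝ] U, ∃ C μ : ℝ, 0 < C ∧ 0 < μ ∧
    ∀ (x0 : H) (u : ℕ → U),
      (∀ j : ℕ, 1 ≤ j → u j = F (nu hbar j) (xtraj T t hbar B x0 u j)) →
      ∀ (j : ℕ) (s : ℝ), t j < s → s ≤ t (j + 1) →
        ‖T (s - t j) (xplus T t hbar B x0 u j)‖ ≤ C * Real.exp (-μ * s) * ‖x0‖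

/-- the infinite-horizon cost `J(u; x0, ℓ)` -/
def Jinf (Q : ℕ → H →L[ℝ] H) (R : ℕ → U →L[ℝ] U) (ℓ : ℕ) (x0 : H) (u : ℕ → U) : ℝ :=
  ∑' m : ℕ,
    (⟪Q (ℓ + m + 1) (xtrajFrom T t hbar B ℓ x0 u (m + 1)), xtrajFrom T t hbar B ℓ x0 u (m + 1)⟫
      + ⟪R (ℓ + m + 1) (u (ℓ + m + 1)), u (ℓ + m + 1)⟫)

/-- the infinite-horizon value function `V(x0; ℓ)` -/
def Vinf (Q : ℕ → H →L[ℝ] H) (R : ℕ → U →L[ℝ] U) (ℓ : ℕ) (x0 : H) : ℝ :=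
  sInf {c : ℝ | ∃ u ∈ UadFrom T t hbar B ℓ x0, c = Jinf T t hbar B Q R ℓ x0 u}

/-- the finite-horizon cost `J(u; x0, ℓ, k̂)` with terminal weight `M` -/
def Jfin (Q : ℕ → H →L[ℝ] H) (R : ℕ → U →L[ℝ] U) (M : H →L[ℝ] H)
    (ℓ khat : ℕ) (x0 : H) (u : ℕ → U) : ℝ :=
  (∑ m ∈ Finset.Icc 1 (khat - ℓ),
    (⟪Q (ℓ + m) (xtrajFrom T t hbar B ℓ x0 u m), xtrajFrom T t hbar B ℓ x0 u m⟫
      + ⟪R (ℓ + m) (u (ℓ + m)), u (ℓ + m)⟫))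
  + ⟪M (xplusFrom T t hbar B ℓ x0 u (khat - ℓ)), xplusFrom T t hbar B ℓ x0 u (khat - ℓ)⟫

/-- the finite-horizon value function `V(x0; ℓ, k̂)` with terminal weight `M` -/
def Vfin (Q : ℕ → H →L[ℝ] H) (R : ℕ → U →L[ℝ] U) (M : H →L[ℝ] H)
    (ℓ khat : ℕ) (x0 : H) : ℝ :=
  sInf {c : ℝ | ∃ u : ℕ → U, Summable (fun j : ℕ => ‖u (ℓ + j + 1)‖ ^ 2) ∧
    c = Jfin T t hbar B Q R M ℓ khat x0 u}

/-- the `k`-th equation of the periodic Riccati-type system, where `G` is the (two-sided)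
inverse of `R_k + B_k* P_k B_k`. -/
def RicEq (Q : ℕ → H →L[ℝ] H) (R : ℕ → U →L[ℝ] U) (P : ℕ → H →L[ℝ] H)
    (G : U →L[ℝ] U) (k : ℕ) : Prop :=
  G ∘L (R k + adj (B k) ∘L P k ∘L B k) = 1 ∧
  (R k + adj (B k) ∘L P k ∘L B k) ∘L G = 1 ∧
  P (k - 1) - adj (T (t k - t (k - 1))) ∘L P k ∘L T (t k - t (k - 1)) =
    adj (T (t k - t (k - 1))) ∘L Q k ∘L T (t k - t (k - 1))
      - adj (T (t k - t (k - 1))) ∘L P k ∘L B k ∘L G ∘L adj (B k) ∘L P k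
          ∘L T (t k - t (k - 1))

/-- `P_0, …, P_ħ` is a solution of the periodic Riccati-type equation. -/
def IsRicSol (Q : ℕ → H →L[ℝ] H) (R : ℕ → U →L[ℝ] U) (P : ℕ → H →L[ℝ] H) : Prop :=
  (∀ k : ℕ, k ≤ hbar → IsNonnegOp (P k)) ∧ P 0 = P hbar ∧
  ∀ k : ℕ, 1 ≤ k → k ≤ hbar → ∃ G : U →L[ℝ] U, RicEq T t B Q R P G k

end Defs
section Proofs

variable {H U : Type*} [NormedAddCommGroup H] [InnerProductSpace ℝ H] [CompleteSpace H]
  [NormedAddCommGroup U] [InnerProductSpace ℝ U] [CompleteSpace U]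
variable (T : ℝ → H →L[ℝ] H) (t : ℕ → ℝ) (hbar : ℕ) (B : ℕ → U →L[ℝ] H)

lemma nu_add_hbar (j : ℕ) : nu hbar (j + hbar) = nu hbar j := by
  simp [nu, Nat.add_mod_right]

lemma nu_mem (hh : 0 < hbar) (j : ℕ) : nu hbar j ∈ Finset.Icc 1 hbar := by
  unfold nu; split
  · simpa using (show 1 ≤ hbar from hh)
  · next h =>
    exact Finset.mem_Icc.2 ⟨Nat.one_le_iff_ne_zero.2 h, le_of_lt (Nat.mod_lt _ hh)⟩

lemma periodic_eq_nu {E : Type*} (hh : 0 < hbar) (Q : ℕ → E)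
    (hper : ∀ j : ℕ, 1 ≤ j → Q (j + hbar) = Q j) :
    ∀ j : ℕ, 1 ≤ j → Q j = Q (nu hbar j) := by
  intro j
  induction j using Nat.strong_induction_on with
  | _ j ih =>
    intro hj
    by_cases hle : j ≤ hbar
    · have hnu : nu hbar j = j := by
        rcases eq_or_lt_of_le hle with h | h
        · subst h; simp [nu, Nat.mod_self]
        · simp [nu, Nat.mod_eq_of_lt h, Nat.one_le_iff_ne_zero.1 hj]
      rw [hnu]
    · push_neg at hle
      have h1 : 1 ≤ j - hbar := by omega
      have hQ' : Q j = Q (j - hbar) := by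
        have := hper (j - hbar) h1
        rwa [Nat.sub_add_cancel (le_of_lt hle)] at this
      have hnu : nu hbar j = nu hbar (j - hbar) := by
        have := nu_add_hbar hbar (j - hbar)
        rwa [Nat.sub_add_cancel (le_of_lt hle)] at this
      rw [hQ', hnu]
      exact ih (j - hbar) (by omega) h1

/-- uniform coercivity/boundedness constants over all indices `j ≥ 1` -/
lemma coercive_bounds {E : Type*} [NormedAddCommGroup E] [InnerProductSpace ℝ E]
    [CompleteSpace E] (hh : 0 < hbar) (Q : ℕ → E →L[ℝ] E) (hQ : MemMCoercive hbar Q) :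
    ∃ c δ : ℝ, 0 ≤ c ∧ 0 < δ ∧ ∀ j : ℕ, 1 ≤ j → ∀ x : E,
      δ * ‖x‖ ^ 2 ≤ ⟪Q j x, x⟫ ∧ ⟪Q j x, x⟫ ≤ c * ‖x‖ ^ 2 := by
  have hex : ∀ j : ℕ, ∃ δ : ℝ, 0 < δ ∧ (1 ≤ j → ∀ x, δ * ‖x‖ ^ 2 ≤ ⟪Q j x, x⟫) := by
    intro j
    by_cases hj : 1 ≤ j
    · obtain ⟨δ, hδ, h⟩ := (hQ.1 j hj).2
      exact ⟨δ, hδ, fun _ => h⟩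
    · exact ⟨1, one_pos, fun h => absurd h hj⟩
  choose δf hδfpos hδf using hex
  have hs : (Finset.Icc 1 hbar).Nonempty := ⟨1, Finset.mem_Icc.2 ⟨le_rfl, hh⟩⟩
  refine ⟨(Finset.Icc 1 hbar).sup' hs (fun j => ‖Q j‖),
    (Finset.Icc 1 hbar).inf' hs δf, ?_, ?_, ?_⟩
  · exact le_trans (norm_nonneg (Q 1)) (Finset.le_sup' (fun j => ‖Q j‖) (Finset.mem_Icc.2 ⟨le_rfl, hh⟩))
  · exact (Finset.lt_inf'_iff hs).2 fun j _ => hδfpos j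
  · intro j hj x
    have hper := periodic_eq_nu hbar hh Q hQ.2 j hj
    have hmem := nu_mem hbar hh j
    have hnu1 : 1 ≤ nu hbar j := (Finset.mem_Icc.1 hmem).1
    constructor
    · calc (Finset.Icc 1 hbar).inf' hs δf * ‖x‖ ^ 2
          ≤ δf (nu hbar j) * ‖x‖ ^ 2 := by
            have := Finset.inf'_le δf hmem
            nlinarith [sq_nonneg ‖x‖]
        _ ≤ ⟪Q (nu hbar j) x, x⟫ := hδf _ hnu1 x
        _ = ⟪Q j x, x⟫ := by rw [← hper]
    · calc ⟪Q j x, x⟫ = ⟪Q (nu hbar j) x, x⟫ := by rw [← hper]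
        _ ≤ ‖Q (nu hbar j) x‖ * ‖x‖ := real_inner_le_norm _ _
        _ ≤ (‖Q (nu hbar j)‖ * ‖x‖) * ‖x‖ := by
            have := (Q (nu hbar j)).le_opNorm x
            nlinarith [norm_nonneg x]
        _ ≤ (Finset.Icc 1 hbar).sup' hs (fun j => ‖Q j‖) * ‖x‖ ^ 2 := by
            have := Finset.le_sup' (fun j => ‖Q j‖) hmem
            nlinarith [norm_nonneg x]

lemma isNonneg_of_coercive {E : Type*} [NormedAddCommGroup E] [InnerProductSpace ℝ E]
    [CompleteSpace E] (Q : ℕ → E →L[ℝ] E) (hQ : MemMCoercive hbar Q) :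
    ∀ j : ℕ, 1 ≤ j → ∀ x : E, 0 ≤ ⟪Q j x, x⟫ :=
  fun j hj x => ((hQ.1 j hj).1).2 x

lemma xplusFrom_congr {ℓ : ℕ} {x0 : H} {u u' : ℕ → U}
    (h : ∀ i, ℓ + 1 ≤ i → u i = u' i) (m : ℕ) :
    xplusFrom T t hbar B ℓ x0 u m = xplusFrom T t hbar B ℓ x0 u' m := by
  induction m with
  | zero => rfl
  | succ m ih =>
    simp only [xplusFrom, ih, h (ℓ + m + 1) (by omega)]

lemma xtrajFrom_congr {ℓ : ℕ} {x0 : H} {u u' : ℕ → U}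
    (h : ∀ i, ℓ + 1 ≤ i → u i = u' i) (m : ℕ) :
    xtrajFrom T t hbar B ℓ x0 u (m + 1) = xtrajFrom T t hbar B ℓ x0 u' (m + 1) := by
  simp only [xtrajFrom, xplusFrom_congr T t hbar B h m]

lemma xplusFrom_shift (htper : ∀ j : ℕ, t (j + hbar) = t j + t hbar)
    (ℓ : ℕ) (x0 : H) (u : ℕ → U) (m : ℕ) :
    xplusFrom T t hbar B (ℓ + hbar) x0 u m
      = xplusFrom T t hbar B ℓ x0 (fun i => u (i + hbar)) m := by
  induction m with
  | zero => rfl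
  | succ m ih =>
    have e1 : ℓ + hbar + m + 1 = ℓ + m + 1 + hbar := by omega
    have e0 : ℓ + hbar + m = ℓ + m + hbar := by omega
    simp only [xplusFrom, ih]
    rw [e1, e0, htper, htper, nu_add_hbar]
    have e2 : t (ℓ + m + 1) + t hbar - (t (ℓ + m) + t hbar) = t (ℓ + m + 1) - t (ℓ + m) := by
      ring
    rw [e2]

lemma xtrajFrom_shift (htper : ∀ j : ℕ, t (j + hbar) = t j + t hbar)
    (ℓ : ℕ) (x0 : H) (u : ℕ → U) (m : ℕ) :
    xtrajFrom T t hbar B (ℓ + hbar) x0 u (m + 1)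
      = xtrajFrom T t hbar B ℓ x0 (fun i => u (i + hbar)) (m + 1) := by
  have e1 : ℓ + hbar + m + 1 = ℓ + m + 1 + hbar := by omega
  have e0 : ℓ + hbar + m = ℓ + m + hbar := by omega
  simp only [xtrajFrom, xplusFrom_shift T t hbar B htper]
  rw [e1, e0, htper, htper]
  have e2 : t (ℓ + m + 1) + t hbar - (t (ℓ + m) + t hbar) = t (ℓ + m + 1) - t (ℓ + m) := by
    ring
  rw [e2]

lemma uadFrom_shift (htper : ∀ j : ℕ, t (j + hbar) = t j + t hbar)
    (ℓ : ℕ) (x0 : H) (u : ℕ → U) :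
    u ∈ UadFrom T t hbar B (ℓ + hbar) x0
      ↔ (fun i => u (i + hbar)) ∈ UadFrom T t hbar B ℓ x0 := by
  unfold UadFrom
  have h1 : (fun j : ℕ => ‖u (ℓ + hbar + j + 1)‖ ^ 2)
      = fun j : ℕ => ‖(fun i => u (i + hbar)) (ℓ + j + 1)‖ ^ 2 := by
    funext j
    rw [show ℓ + hbar + j + 1 = ℓ + j + 1 + hbar from by omega]
  have h2 : (fun j : ℕ => ‖xtrajFrom T t hbar B (ℓ + hbar) x0 u (j + 1)‖ ^ 2)
      = fun j : ℕ => ‖xtrajFrom T t hbar B ℓ x0 (fun i => u (i + hbar)) (j + 1)‖ ^ 2 := by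
    funext j
    rw [xtrajFrom_shift T t hbar B htper]
  rw [Set.mem_setOf_eq, Set.mem_setOf_eq, h1, h2]

lemma Jinf_shift (Q : ℕ → H →L[ℝ] H) (R : ℕ → U →L[ℝ] U)
    (htper : ∀ j : ℕ, t (j + hbar) = t j + t hbar)
    (hQper : ∀ j : ℕ, 1 ≤ j → Q (j + hbar) = Q j)
    (hRper : ∀ j : ℕ, 1 ≤ j → R (j + hbar) = R j)
    (ℓ : ℕ) (x0 : H) (u : ℕ → U) :
    Jinf T t hbar B Q R (ℓ + hbar) x0 u
      = Jinf T t hbar B Q R ℓ x0 (fun i => u (i + hbar)) := by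
  unfold Jinf
  congr 1
  funext m
  rw [xtrajFrom_shift T t hbar B htper,
    show ℓ + hbar + m + 1 = ℓ + m + 1 + hbar from by omega,
    hQper _ (by omega), hRper _ (by omega)]

lemma Vinf_shift (Q : ℕ → H →L[ℝ] H) (R : ℕ → U →L[ℝ] U)
    (htper : ∀ j : ℕ, t (j + hbar) = t j + t hbar)
    (hQper : ∀ j : ℕ, 1 ≤ j → Q (j + hbar) = Q j)
    (hRper : ∀ j : ℕ, 1 ≤ j → R (j + hbar) = R j)
    (ℓ : ℕ) (x0 : H) :
    Vinf T t hbar B Q R (ℓ + hbar) x0 = Vinf T t hbar B Q R ℓ x0 := by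
  unfold Vinf
  congr 1
  ext c
  constructor
  · rintro ⟨u, hu, rfl⟩
    exact ⟨fun i => u (i + hbar), (uadFrom_shift T t hbar B htper ℓ x0 u).1 hu,
      Jinf_shift T t hbar B Q R htper hQper hRper ℓ x0 u⟩
  · rintro ⟨u, hu, rfl⟩
    have he : (fun i => (fun i => u (i - hbar)) (i + hbar)) = u := by
      funext i; simp
    refine ⟨fun i => u (i - hbar), ?_, ?_⟩
    · rw [uadFrom_shift T t hbar B htper, he]; exact hu
    · rw [Jinf_shift T t hbar B Q R htper hQper hRper, he]

lemma uad_nonempty_shift (htper : ∀ j : ℕ, t (j + hbar) = t j + t hbar)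
    (ℓ : ℕ) (x0 : H) (h : (UadFrom T t hbar B ℓ x0).Nonempty) :
    (UadFrom T t hbar B (ℓ + hbar) x0).Nonempty := by
  obtain ⟨u, hu⟩ := h
  refine ⟨fun i => u (i - hbar), ?_⟩
  rw [uadFrom_shift T t hbar B htper]
  have he : (fun i => (fun i => u (i - hbar)) (i + hbar)) = u := by
    funext i; simp
  rw [he]; exact hu

lemma Vinf_shift_mul (Q : ℕ → H →L[ℝ] H) (R : ℕ → U →L[ℝ] U)
    (htper : ∀ j : ℕ, t (j + hbar) = t j + t hbar)
    (hQper : ∀ j : ℕ, 1 ≤ j → Q (j + hbar) = Q j)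
    (hRper : ∀ j : ℕ, 1 ≤ j → R (j + hbar) = R j)
    (ℓ q : ℕ) (x0 : H) :
    Vinf T t hbar B Q R (ℓ + q * hbar) x0 = Vinf T t hbar B Q R ℓ x0 := by
  induction q with
  | zero => simp
  | succ q ih =>
    have e : ℓ + (q + 1) * hbar = (ℓ + q * hbar) + hbar := by ring
    rw [e, Vinf_shift T t hbar B Q R htper hQper hRper, ih]

lemma xplusFrom_concat_left {ℓ m : ℕ} {x0 : H} {u v : ℕ → U} {i : ℕ} (hi : i ≤ m) :
    xplusFrom T t hbar B ℓ x0 (fun i => if i ≤ ℓ + m then u i else v i) i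
      = xplusFrom T t hbar B ℓ x0 u i := by
  induction i with
  | zero => rfl
  | succ i ih =>
    simp only [xplusFrom, ih (by omega)]
    rw [if_pos (by omega : ℓ + i + 1 ≤ ℓ + m)]

lemma xplusFrom_concat_right {ℓ m : ℕ} {x0 : H} {u v : ℕ → U} (i : ℕ) :
    xplusFrom T t hbar B ℓ x0 (fun i => if i ≤ ℓ + m then u i else v i) (m + i)
      = xplusFrom T t hbar B (ℓ + m) (xplusFrom T t hbar B ℓ x0 u m) v i := by
  induction i with
  | zero => exact xplusFrom_concat_left T t hbar B (le_refl m)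
  | succ i ih =>
    show xplusFrom T t hbar B ℓ x0 _ ((m + i) + 1) = _
    simp only [xplusFrom, ih]
    rw [if_neg (by omega : ¬ (ℓ + (m + i) + 1 ≤ ℓ + m)),
      show ℓ + (m + i) + 1 = ℓ + m + i + 1 from by omega,
      show ℓ + (m + i) = ℓ + m + i from by omega]

lemma xtrajFrom_concat_left {ℓ m : ℕ} {x0 : H} {u v : ℕ → U} {i : ℕ} (hi : i ≤ m) :
    xtrajFrom T t hbar B ℓ x0 (fun i => if i ≤ ℓ + m then u i else v i) i
      = xtrajFrom T t hbar B ℓ x0 u i := by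
  cases i with
  | zero => rfl
  | succ i =>
    simp only [xtrajFrom, xplusFrom_concat_left T t hbar B (by omega : i ≤ m)]

lemma xtrajFrom_concat_right {ℓ m : ℕ} {x0 : H} {u v : ℕ → U} (i : ℕ) :
    xtrajFrom T t hbar B ℓ x0 (fun i => if i ≤ ℓ + m then u i else v i) (m + i + 1)
      = xtrajFrom T t hbar B (ℓ + m) (xplusFrom T t hbar B ℓ x0 u m) v (i + 1) := by
  show xtrajFrom T t hbar B ℓ x0 _ ((m + i) + 1) = _
  simp only [xtrajFrom, xplusFrom_concat_right T t hbar B i]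
  rw [show ℓ + (m + i) + 1 = ℓ + m + i + 1 from by omega,
    show ℓ + (m + i) = ℓ + m + i from by omega]

lemma uad_concat {ℓ m : ℕ} {x0 : H} {u v : ℕ → U}
    (hv : v ∈ UadFrom T t hbar B (ℓ + m) (xplusFrom T t hbar B ℓ x0 u m)) :
    (fun i => if i ≤ ℓ + m then u i else v i) ∈ UadFrom T t hbar B ℓ x0 := by
  obtain ⟨hv1, hv2⟩ := hv
  constructor
  · refine (summable_nat_add_iff m).mp ?_
    have he : (fun j : ℕ =>
        ‖(fun i => if i ≤ ℓ + m then u i else v i) (ℓ + (j + m) + 1)‖ ^ 2)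
        = fun j : ℕ => ‖v (ℓ + m + j + 1)‖ ^ 2 := by
      funext j
      rw [show ℓ + (j + m) + 1 = ℓ + m + j + 1 from by omega]
      simp [show ¬ (ℓ + m + j + 1 ≤ ℓ + m) from by omega]
    exact he ▸ hv1
  · refine (summable_nat_add_iff m).mp ?_
    have he : (fun j : ℕ =>
        ‖xtrajFrom T t hbar B ℓ x0 (fun i => if i ≤ ℓ + m then u i else v i) ((j + m) + 1)‖ ^ 2)
        = fun j : ℕ =>
        ‖xtrajFrom T t hbar B (ℓ + m) (xplusFrom T t hbar B ℓ x0 u m) v (j + 1)‖ ^ 2 := by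
      funext j
      rw [show (j + m) + 1 = m + j + 1 from by omega, xtrajFrom_concat_right T t hbar B j]
    exact he ▸ hv2

lemma stage_summable (Q : ℕ → H →L[ℝ] H) (R : ℕ → U →L[ℝ] U) (cQ cR : ℝ)
    (hQb : ∀ j : ℕ, 1 ≤ j → ∀ x : H, ⟪Q j x, x⟫ ≤ cQ * ‖x‖ ^ 2)
    (hRb : ∀ j : ℕ, 1 ≤ j → ∀ x : U, ⟪R j x, x⟫ ≤ cR * ‖x‖ ^ 2)
    (hQ0 : ∀ j : ℕ, 1 ≤ j → ∀ x : H, 0 ≤ ⟪Q j x, x⟫)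
    (hR0 : ∀ j : ℕ, 1 ≤ j → ∀ x : U, 0 ≤ ⟪R j x, x⟫)
    {ℓ : ℕ} {x0 : H} {u : ℕ → U} (hu : u ∈ UadFrom T t hbar B ℓ x0) :
    Summable (fun m : ℕ =>
      ⟪Q (ℓ + m + 1) (xtrajFrom T t hbar B ℓ x0 u (m + 1)),
          xtrajFrom T t hbar B ℓ x0 u (m + 1)⟫
        + ⟪R (ℓ + m + 1) (u (ℓ + m + 1)), u (ℓ + m + 1)⟫) := by
  obtain ⟨hu1, hu2⟩ := hu
  refine Summable.of_nonneg_of_le (fun m => ?_) (fun m => ?_)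
    (((hu2.mul_left cQ).add (hu1.mul_left cR)))
  · exact add_nonneg (hQ0 _ (by omega) _) (hR0 _ (by omega) _)
  · exact add_le_add (hQb _ (by omega) _) (hRb _ (by omega) _)

lemma Jinf_nonneg (Q : ℕ → H →L[ℝ] H) (R : ℕ → U →L[ℝ] U)
    (hQ0 : ∀ j : ℕ, 1 ≤ j → ∀ x : H, 0 ≤ ⟪Q j x, x⟫)
    (hR0 : ∀ j : ℕ, 1 ≤ j → ∀ x : U, 0 ≤ ⟪R j x, x⟫)
    (ℓ : ℕ) (x0 : H) (u : ℕ → U) : 0 ≤ Jinf T t hbar B Q R ℓ x0 u :=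
  tsum_nonneg fun m => add_nonneg (hQ0 _ (by omega) _) (hR0 _ (by omega) _)

lemma vset_bddBelow (Q : ℕ → H →L[ℝ] H) (R : ℕ → U →L[ℝ] U)
    (hQ0 : ∀ j : ℕ, 1 ≤ j → ∀ x : H, 0 ≤ ⟪Q j x, x⟫)
    (hR0 : ∀ j : ℕ, 1 ≤ j → ∀ x : U, 0 ≤ ⟪R j x, x⟫)
    (ℓ : ℕ) (x0 : H) :
    BddBelow {c : ℝ | ∃ u ∈ UadFrom T t hbar B ℓ x0, c = Jinf T t hbar B Q R ℓ x0 u} := by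
  refine ⟨0, fun c hc => ?_⟩
  obtain ⟨u, _, rfl⟩ := hc
  exact Jinf_nonneg T t hbar B Q R hQ0 hR0 ℓ x0 u

lemma uad_nonempty (htper : ∀ j : ℕ, t (j + hbar) = t j + t hbar) (hh : 0 < hbar)
    (hAd : ∀ x0 : H, (UadFrom T t hbar B 0 x0).Nonempty) (ℓ : ℕ) (x0 : H) :
    (UadFrom T t hbar B ℓ x0).Nonempty := by
  have hmul : ∀ (q : ℕ) (y : H), (UadFrom T t hbar B (q * hbar) y).Nonempty := by
    intro q y
    induction q with
    | zero => simpa using hAd y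
    | succ q ih =>
      have e : (q + 1) * hbar = q * hbar + hbar := by ring
      rw [e]
      exact uad_nonempty_shift T t hbar B htper _ y ih
  set m := (ℓ + 1) * hbar - ℓ with hm
  have hml : ℓ + m = (ℓ + 1) * hbar := by
    have : ℓ + 1 ≤ (ℓ + 1) * hbar := Nat.le_mul_of_pos_right _ hh
    omega
  set y := xplusFrom T t hbar B ℓ x0 (fun _ => 0) m with hy
  have h0 : (UadFrom T t hbar B (ℓ + m) y).Nonempty := by
    rw [hml]; exact hmul (ℓ + 1) y
  obtain ⟨v, hv⟩ := h0
  exact ⟨_, uad_concat T t hbar B hv⟩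

lemma Jinf_concat (Q : ℕ → H →L[ℝ] H) (R : ℕ → U →L[ℝ] U) (cQ cR : ℝ)
    (hQb : ∀ j : ℕ, 1 ≤ j → ∀ x : H, ⟪Q j x, x⟫ ≤ cQ * ‖x‖ ^ 2)
    (hRb : ∀ j : ℕ, 1 ≤ j → ∀ x : U, ⟪R j x, x⟫ ≤ cR * ‖x‖ ^ 2)
    (hQ0 : ∀ j : ℕ, 1 ≤ j → ∀ x : H, 0 ≤ ⟪Q j x, x⟫)
    (hR0 : ∀ j : ℕ, 1 ≤ j → ∀ x : U, 0 ≤ ⟪R j x, x⟫)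
    {ℓ m : ℕ} {x0 : H} {u v : ℕ → U}
    (hv : v ∈ UadFrom T t hbar B (ℓ + m) (xplusFrom T t hbar B ℓ x0 u m)) :
    Jinf T t hbar B Q R ℓ x0 (fun i => if i ≤ ℓ + m then u i else v i)
      = (∑ i ∈ Finset.range m,
          (⟪Q (ℓ + i + 1) (xtrajFrom T t hbar B ℓ x0 u (i + 1)),
              xtrajFrom T t hbar B ℓ x0 u (i + 1)⟫
            + ⟪R (ℓ + i + 1) (u (ℓ + i + 1)), u (ℓ + i + 1)⟫))
        + Jinf T t hbar B Q R (ℓ + m) (xplusFrom T t hbar B ℓ x0 u m) v := by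
  have hw : (fun i => if i ≤ ℓ + m then u i else v i) ∈ UadFrom T t hbar B ℓ x0 :=
    uad_concat T t hbar B hv
  have hsum := stage_summable T t hbar B Q R cQ cR hQb hRb hQ0 hR0 hw
  unfold Jinf
  rw [← Summable.sum_add_tsum_nat_add m hsum]
  congr 1
  · refine Finset.sum_congr rfl fun i hi => ?_
    have him : i + 1 ≤ m := by
      have := Finset.mem_range.1 hi; omega
    rw [xtrajFrom_concat_left T t hbar B him, if_pos (by omega : ℓ + i + 1 ≤ ℓ + m)]
  · refine tsum_congr fun i => ?_
    rw [show (i + m) + 1 = m + i + 1 from by omega, xtrajFrom_concat_right T t hbar B i]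
    rw [show ℓ + (i + m) + 1 = ℓ + m + i + 1 from by omega]
    simp [show ¬ (ℓ + m + i + 1 ≤ ℓ + m) from by omega]

lemma dp_ineq (Q : ℕ → H →L[ℝ] H) (R : ℕ → U →L[ℝ] U) (cQ cR : ℝ)
    (htper : ∀ j : ℕ, t (j + hbar) = t j + t hbar) (hh : 0 < hbar)
    (hAd : ∀ x0 : H, (UadFrom T t hbar B 0 x0).Nonempty)
    (hQb : ∀ j : ℕ, 1 ≤ j → ∀ x : H, ⟪Q j x, x⟫ ≤ cQ * ‖x‖ ^ 2)
    (hRb : ∀ j : ℕ, 1 ≤ j → ∀ x : U, ⟪R j x, x⟫ ≤ cR * ‖x‖ ^ 2)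
    (hQ0 : ∀ j : ℕ, 1 ≤ j → ∀ x : H, 0 ≤ ⟪Q j x, x⟫)
    (hR0 : ∀ j : ℕ, 1 ≤ j → ∀ x : U, 0 ≤ ⟪R j x, x⟫)
    (ℓ m : ℕ) (x0 : H) (u : ℕ → U) :
    Vinf T t hbar B Q R ℓ x0
      ≤ (∑ i ∈ Finset.range m,
          (⟪Q (ℓ + i + 1) (xtrajFrom T t hbar B ℓ x0 u (i + 1)),
              xtrajFrom T t hbar B ℓ x0 u (i + 1)⟫
            + ⟪R (ℓ + i + 1) (u (ℓ + i + 1)), u (ℓ + i + 1)⟫))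
        + Vinf T t hbar B Q R (ℓ + m) (xplusFrom T t hbar B ℓ x0 u m) := by
  set y := xplusFrom T t hbar B ℓ x0 u m with hy
  set S := ∑ i ∈ Finset.range m,
      (⟪Q (ℓ + i + 1) (xtrajFrom T t hbar B ℓ x0 u (i + 1)),
          xtrajFrom T t hbar B ℓ x0 u (i + 1)⟫
        + ⟪R (ℓ + i + 1) (u (ℓ + i + 1)), u (ℓ + i + 1)⟫) with hS
  have hne : (UadFrom T t hbar B (ℓ + m) y).Nonempty :=
    uad_nonempty T t hbar B htper hh hAd (ℓ + m) y
  have key : Vinf T t hbar B Q R ℓ x0 - S ≤ Vinf T t hbar B Q R (ℓ + m) y := by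
    refine le_csInf ?_ ?_
    · obtain ⟨v, hv⟩ := hne
      exact ⟨_, v, hv, rfl⟩
    · rintro c ⟨v, hv, rfl⟩
      have h1 : Vinf T t hbar B Q R ℓ x0
          ≤ Jinf T t hbar B Q R ℓ x0 (fun i => if i ≤ ℓ + m then u i else v i) :=
        csInf_le (vset_bddBelow T t hbar B Q R hQ0 hR0 ℓ x0)
          ⟨_, uad_concat T t hbar B hv, rfl⟩
      rw [Jinf_concat T t hbar B Q R cQ cR hQb hRb hQ0 hR0 hv] at h1
      linarith
  linarith

lemma toReal_two_pow (x : ℝ) : x ^ (2 : ENNReal).toReal = x ^ 2 := by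
  have h2 : (2 : ENNReal).toReal = (2 : ℝ) := by simp
  rw [h2, show (2 : ℝ) = ((2 : ℕ) : ℝ) by norm_num, Real.rpow_natCast]

lemma memℓp_two_of_sq {X : Type*} [NormedAddCommGroup X] {f : ℕ → X}
    (hf : Summable fun i => ‖f i‖ ^ 2) : Memℓp f 2 := by
  apply memℓp_gen
  have he : (fun i => ‖f i‖ ^ (2 : ENNReal).toReal) = fun i => ‖f i‖ ^ 2 := by
    funext i; exact toReal_two_pow _
  rw [he]; exact hf

lemma summable_sq_of_lp {X : Type*} [NormedAddCommGroup X] (f : lp (fun _ : ℕ => X) 2) :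
    Summable fun i => ‖f i‖ ^ 2 := by
  have := (memℓp_gen_iff (by norm_num : 0 < (2 : ENNReal).toReal)).1 (lp.memℓp f)
  have he : (fun i => ‖f i‖ ^ (2 : ENNReal).toReal) = fun i => ‖f i‖ ^ 2 := by
    funext i; exact toReal_two_pow _
  rwa [he] at this

lemma lp_norm_sq {X : Type*} [NormedAddCommGroup X] (f : lp (fun _ : ℕ => X) 2) :
    ‖f‖ ^ 2 = ∑' i, ‖f i‖ ^ 2 := by
  have := lp.norm_rpow_eq_tsum (by norm_num : 0 < (2 : ENNReal).toReal) f
  rw [toReal_two_pow] at this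
  rw [this]
  exact tsum_congr fun i => toReal_two_pow _

/-- coordinate evaluation on `ℓ²` as a continuous linear map -/
def evalCLM (X : Type*) [NormedAddCommGroup X] [InnerProductSpace ℝ X] (n : ℕ) :
    lp (fun _ : ℕ => X) 2 →L[ℝ] X :=
  LinearMap.mkContinuous
    { toFun := fun f => f n
      map_add' := fun f g => rfl
      map_smul' := fun c f => rfl }
    1 (fun f => by
      rw [one_mul]; exact lp.norm_apply_le_norm (by norm_num : (2 : ENNReal) ≠ 0) f n)

@[simp] lemma evalCLM_apply {X : Type*} [NormedAddCommGroup X] [InnerProductSpace ℝ X]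
    (n : ℕ) (f : lp (fun _ : ℕ => X) 2) : evalCLM X n f = f n := rfl

/-- the `m`-th post-impulse state as a continuous linear map of `(x0, û)` -/
def XplusL (ℓ : ℕ) : ℕ → (H × lp (fun _ : ℕ => U) 2) →L[ℝ] H
  | 0 => ContinuousLinearMap.fst ℝ H (lp (fun _ : ℕ => U) 2)
  | m + 1 => (T (t (ℓ + m + 1) - t (ℓ + m))).comp (XplusL ℓ m)
      + (B (nu hbar (ℓ + m + 1))).comp ((evalCLM U m).comp
          (ContinuousLinearMap.snd ℝ H (lp (fun _ : ℕ => U) 2)))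

lemma XplusL_eq (ℓ : ℕ) (m : ℕ) (x0 : H) (uh : lp (fun _ : ℕ => U) 2) :
    XplusL T t hbar B ℓ m (x0, uh)
      = xplusFrom T t hbar B ℓ x0 (fun i => uh (i - (ℓ + 1))) m := by
  induction m with
  | zero => rfl
  | succ m ih =>
    simp only [XplusL, xplusFrom, ContinuousLinearMap.add_apply,
      ContinuousLinearMap.comp_apply, ContinuousLinearMap.coe_snd', evalCLM_apply, ih]
    rw [show ℓ + m + 1 - (ℓ + 1) = m from by omega]

/-- the `(m+1)`-st state as a continuous linear map of `(x0, û)` -/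
def XtrajL (ℓ m : ℕ) : (H × lp (fun _ : ℕ => U) 2) →L[ℝ] H :=
  (T (t (ℓ + m + 1) - t (ℓ + m))).comp (XplusL T t hbar B ℓ m)

lemma XtrajL_eq (ℓ : ℕ) (m : ℕ) (x0 : H) (uh : lp (fun _ : ℕ => U) 2) :
    XtrajL T t hbar B ℓ m (x0, uh)
      = xtrajFrom T t hbar B ℓ x0 (fun i => uh (i - (ℓ + 1))) (m + 1) := by
  simp only [XtrajL, ContinuousLinearMap.comp_apply, XplusL_eq, xtrajFrom]

set_option maxHeartbeats 1600000 in
set_option synthInstance.maxHeartbeats 200000 in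
lemma part1 (htper : ∀ j : ℕ, t (j + hbar) = t j + t hbar) (hh : 0 < hbar)
    (hAd : ∀ x0 : H, (UadFrom T t hbar B 0 x0).Nonempty)
    (Q : ℕ → H →L[ℝ] H) (R : ℕ → U →L[ℝ] U)
    (hQ : MemMCoercive hbar Q) (hR : MemMCoercive hbar R) (ℓ : ℕ) :
    ∃ K : ℝ, 0 < K ∧ ∀ x0 : H, Vinf T t hbar B Q R ℓ x0 ≤ K * ‖x0‖ ^ 2 := by
  classical
  obtain ⟨cQ, δQ, hcQ0, hδQ, hQbd⟩ := coercive_bounds hbar hh Q hQ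
  obtain ⟨cR, δR, hcR0, hδR, hRbd⟩ := coercive_bounds hbar hh R hR
  have hQ0 := isNonneg_of_coercive hbar Q hQ
  have hR0 := isNonneg_of_coercive hbar R hR
  let g : ℕ → (H × lp (fun _ : ℕ => U) 2 × lp (fun _ : ℕ => H) 2) →L[ℝ] H := fun m =>
    (evalCLM H m).comp ((ContinuousLinearMap.snd ℝ (lp (fun _ : ℕ => U) 2)
        (lp (fun _ : ℕ => H) 2)).comp
      (ContinuousLinearMap.snd ℝ H (lp (fun _ : ℕ => U) 2 × lp (fun _ : ℕ => H) 2)))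
    - (XtrajL T t hbar B ℓ m).comp
      ((ContinuousLinearMap.fst ℝ H (lp (fun _ : ℕ => U) 2 × lp (fun _ : ℕ => H) 2)).prod
        ((ContinuousLinearMap.fst ℝ (lp (fun _ : ℕ => U) 2) (lp (fun _ : ℕ => H) 2)).comp
          (ContinuousLinearMap.snd ℝ H (lp (fun _ : ℕ => U) 2 × lp (fun _ : ℕ => H) 2))))
  have hg : ∀ m p, g m p = p.2.2 m - XtrajL T t hbar B ℓ m (p.1, p.2.1) := by
    intro m p
    simp [g, ContinuousLinearMap.comp_apply, ContinuousLinearMap.sub_apply,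
      ContinuousLinearMap.prod_apply]
  let W : Submodule ℝ (H × lp (fun _ : ℕ => U) 2 × lp (fun _ : ℕ => H) 2) :=
    ⨅ m : ℕ, (g m).ker
  have hWmem : ∀ p, p ∈ W ↔ ∀ m, g m p = 0 := by
    intro p
    simp [W, Submodule.mem_iInf, LinearMap.mem_ker]
  have hWclosed : IsClosed (W : Set (H × lp (fun _ : ℕ => U) 2 × lp (fun _ : ℕ => H) 2)) := by
    have hco : (W : Set (H × lp (fun _ : ℕ => U) 2 × lp (fun _ : ℕ => H) 2))
        = ⋂ m, ((g m).ker : Set _) := Submodule.coe_iInf _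
    rw [hco]
    exact isClosed_iInter fun m => ContinuousLinearMap.isClosed_ker (g m)
  haveI : CompleteSpace W := hWclosed.completeSpace_coe
  let π : W →L[ℝ] H :=
    (ContinuousLinearMap.fst ℝ H (lp (fun _ : ℕ => U) 2 × lp (fun _ : ℕ => H) 2)).comp W.subtypeL
  have hπ : Function.Surjective π := by
    intro x0
    obtain ⟨u, hu⟩ := uad_nonempty T t hbar B htper hh hAd ℓ x0
    let uh : lp (fun _ : ℕ => U) 2 := ⟨fun j => u (ℓ + j + 1), memℓp_two_of_sq hu.1⟩
    let yh : lp (fun _ : ℕ => H) 2 :=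
      ⟨fun j => xtrajFrom T t hbar B ℓ x0 u (j + 1), memℓp_two_of_sq hu.2⟩
    have hmem : (x0, uh, yh) ∈ W := by
      rw [hWmem]
      intro m
      rw [hg]
      have hcongr : xtrajFrom T t hbar B ℓ x0 (fun i => uh (i - (ℓ + 1))) (m + 1)
          = xtrajFrom T t hbar B ℓ x0 u (m + 1) := by
        refine xtrajFrom_congr T t hbar B (fun i hi => ?_) m
        show u (ℓ + (i - (ℓ + 1)) + 1) = u i
        rw [show ℓ + (i - (ℓ + 1)) + 1 = i from by omega]
      show yh m - XtrajL T t hbar B ℓ m (x0, uh) = 0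
      rw [XtrajL_eq, hcongr]
      show xtrajFrom T t hbar B ℓ x0 u (m + 1) - xtrajFrom T t hbar B ℓ x0 u (m + 1) = 0
      exact sub_self _
    exact ⟨⟨(x0, uh, yh), hmem⟩, rfl⟩
  obtain ⟨C, hC, hpre⟩ := ContinuousLinearMap.exists_preimage_norm_le π hπ
  refine ⟨cQ * C ^ 2 + cR * C ^ 2 + 1, by positivity, ?_⟩
  intro x0
  obtain ⟨w, hwπ, hwn⟩ := hpre x0
  obtain ⟨⟨x1, uh, yh⟩, hwmem⟩ := w
  have hx1 : x0 = x1 := hwπ.symm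
  subst hx1
  rw [hWmem] at hwmem
  set u : ℕ → U := fun i => uh (i - (ℓ + 1)) with hudef
  have htraj : ∀ m : ℕ, xtrajFrom T t hbar B ℓ x0 u (m + 1) = yh m := by
    intro m
    have := hwmem m
    rw [hg] at this
    have h2 := sub_eq_zero.1 this
    rw [XtrajL_eq] at h2
    exact h2.symm
  have huu : ∀ j : ℕ, u (ℓ + j + 1) = uh j := by
    intro j
    show uh (ℓ + j + 1 - (ℓ + 1)) = uh j
    rw [show ℓ + j + 1 - (ℓ + 1) = j from by omega]
  have hu : u ∈ UadFrom T t hbar B ℓ x0 := by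
    constructor
    · have he : (fun j : ℕ => ‖u (ℓ + j + 1)‖ ^ 2) = fun j : ℕ => ‖uh j‖ ^ 2 := by
        funext j; rw [huu]
      rw [he]; exact summable_sq_of_lp uh
    · have he : (fun j : ℕ => ‖xtrajFrom T t hbar B ℓ x0 u (j + 1)‖ ^ 2)
          = fun j : ℕ => ‖yh j‖ ^ 2 := by
        funext j; rw [htraj]
      rw [he]; exact summable_sq_of_lp yh
  have hVle : Vinf T t hbar B Q R ℓ x0 ≤ Jinf T t hbar B Q R ℓ x0 u :=
    csInf_le (vset_bddBelow T t hbar B Q R hQ0 hR0 ℓ x0) ⟨u, hu, rfl⟩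
  have hJle : Jinf T t hbar B Q R ℓ x0 u ≤ cQ * ‖yh‖ ^ 2 + cR * ‖uh‖ ^ 2 := by
    have hsumy : Summable fun m : ℕ => cQ * ‖yh m‖ ^ 2 := (summable_sq_of_lp yh).mul_left cQ
    have hsumu : Summable fun m : ℕ => cR * ‖uh m‖ ^ 2 := (summable_sq_of_lp uh).mul_left cR
    have hstage := stage_summable T t hbar B Q R cQ cR
      (fun j hj x => (hQbd j hj x).2) (fun j hj x => (hRbd j hj x).2) hQ0 hR0 hu
    have hle : Jinf T t hbar B Q R ℓ x0 u
        ≤ ∑' m : ℕ, (cQ * ‖yh m‖ ^ 2 + cR * ‖uh m‖ ^ 2) := by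
      refine Summable.tsum_le_tsum (fun m => ?_) hstage (hsumy.add hsumu)
      have h1 := (hQbd (ℓ + m + 1) (by omega) (xtrajFrom T t hbar B ℓ x0 u (m + 1))).2
      have h2 := (hRbd (ℓ + m + 1) (by omega) (u (ℓ + m + 1))).2
      rw [htraj m] at h1
      rw [huu m] at h2
      rw [htraj m, huu m]
      exact add_le_add h1 h2
    calc Jinf T t hbar B Q R ℓ x0 u ≤ _ := hle
      _ = cQ * ‖yh‖ ^ 2 + cR * ‖uh‖ ^ 2 := by
          rw [Summable.tsum_add hsumy hsumu, tsum_mul_left, tsum_mul_left, lp_norm_sq, lp_norm_sq]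
  have hyn : ‖yh‖ ≤ C * ‖x0‖ := by
    refine le_trans ?_ hwn
    calc ‖yh‖ ≤ ‖(uh, yh)‖ := norm_snd_le (uh, yh)
      _ ≤ ‖(x0, uh, yh)‖ := norm_snd_le (x0, (uh, yh))
      _ = _ := rfl
  have hun : ‖uh‖ ≤ C * ‖x0‖ := by
    refine le_trans ?_ hwn
    calc ‖uh‖ ≤ ‖(uh, yh)‖ := norm_fst_le (uh, yh)
      _ ≤ ‖(x0, uh, yh)‖ := norm_snd_le (x0, (uh, yh))
      _ = _ := rfl
  have hyn2 : ‖yh‖ ^ 2 ≤ C ^ 2 * ‖x0‖ ^ 2 := by nlinarith [norm_nonneg yh, norm_nonneg x0]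
  have hun2 : ‖uh‖ ^ 2 ≤ C ^ 2 * ‖x0‖ ^ 2 := by nlinarith [norm_nonneg uh, norm_nonneg x0]
  nlinarith [norm_nonneg x0, sq_nonneg ‖x0‖]

lemma Jfin_zero_eq (Q : ℕ → H →L[ℝ] H) (R : ℕ → U →L[ℝ] U) (ℓ khat : ℕ) (x0 : H) (u : ℕ → U) :
    Jfin T t hbar B Q R 0 ℓ khat x0 u
      = ∑ m ∈ Finset.Icc 1 (khat - ℓ),
          (⟪Q (ℓ + m) (xtrajFrom T t hbar B ℓ x0 u m), xtrajFrom T t hbar B ℓ x0 u m⟫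
            + ⟪R (ℓ + m) (u (ℓ + m)), u (ℓ + m)⟫) := by
  unfold Jfin
  simp

lemma stage_sum_reindex (Q : ℕ → H →L[ℝ] H) (R : ℕ → U →L[ℝ] U)
    (ℓ n : ℕ) (x0 : H) (u : ℕ → U) :
    ∑ m ∈ Finset.Icc 1 n,
        (⟪Q (ℓ + m) (xtrajFrom T t hbar B ℓ x0 u m), xtrajFrom T t hbar B ℓ x0 u m⟫
          + ⟪R (ℓ + m) (u (ℓ + m)), u (ℓ + m)⟫)
      = ∑ i ∈ Finset.range n,
        (⟪Q (ℓ + i + 1) (xtrajFrom T t hbar B ℓ x0 u (i + 1)),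
            xtrajFrom T t hbar B ℓ x0 u (i + 1)⟫
          + ⟪R (ℓ + i + 1) (u (ℓ + i + 1)), u (ℓ + i + 1)⟫) := by
  rw [show Finset.Icc 1 n = Finset.Ico 1 (n + 1) from by rw [Finset.Ico_add_one_right_eq_Icc],
    Finset.sum_Ico_eq_sum_range]
  simp only [Nat.add_sub_cancel]
  refine Finset.sum_congr rfl fun i _ => ?_
  rw [show 1 + i = i + 1 from by omega, show ℓ + (i + 1) = ℓ + i + 1 from by omega]

end Proofs

set_option maxHeartbeats 2000000 in
/-- Quadratic growth of the infinite-horizon value function and its finite-horizon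
approximation (with zero terminal weight). -/
theorem value_function_growth_and_approximation
    {H U : Type*} [NormedAddCommGroup H] [InnerProductSpace ℝ H]
    [CompleteSpace H] [NormedAddCommGroup U] [InnerProductSpace ℝ U] [CompleteSpace U]
    (T : ℝ → H →L[ℝ] H) (hT0 : T 0 = 1)
    (hTadd : ∀ a b : ℝ, 0 ≤ a → 0 ≤ b → T (a + b) = T a ∘L T b)
    (hTcont : ∀ x : H, ContinuousOn (fun τ : ℝ => T τ x) (Set.Ici (0 : ℝ)))
    (hbar : ℕ) (hhbar : 0 < hbar)
    (t : ℕ → ℝ) (ht0 : t 0 = 0) (htmono : StrictMono t)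
    (htper : ∀ j : ℕ, t (j + hbar) = t j + t hbar)
    (B : ℕ → U →L[ℝ] H)
    (Q : ℕ → H →L[ℝ] H) (R : ℕ → U →L[ℝ] U)
    (hQ : MemMCoercive hbar Q) (hR : MemMCoercive hbar R)
    (hAd : ∀ x0 : H, (UadFrom T t hbar B 0 x0).Nonempty) :
    ∀ ℓ : ℕ,
      (∃ K : ℝ, 0 < K ∧ ∀ x0 : H, Vinf T t hbar B Q R ℓ x0 ≤ K * ‖x0‖ ^ 2) ∧
      (∀ x0 : H,
        Filter.Tendsto (fun k : ℕ => Vfin T t hbar B Q R 0 ℓ k x0)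
          Filter.atTop (nhds (Vinf T t hbar B Q R ℓ x0))) := by
  intro ℓ
  have hQ0 := isNonneg_of_coercive hbar Q hQ
  have hR0 := isNonneg_of_coercive hbar R hR
  obtain ⟨cQ, δQ, hcQ0, hδQ, hQbd⟩ := coercive_bounds hbar hhbar Q hQ
  obtain ⟨cR, δR, hcR0, hδR, hRbd⟩ := coercive_bounds hbar hhbar R hR
  set δ := min δQ δR with hδdef
  have hδ : 0 < δ := lt_min hδQ hδR
  refine ⟨part1 T t hbar B htper hhbar hAd Q R hQ hR ℓ, ?_⟩
  -- uniform quadratic bound for all later starting indices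
  have hP1 := fun ℓ' => part1 T t hbar B htper hhbar hAd Q R hQ hR ℓ'
  choose Kf hKfpos hKfb using hP1
  have hsIcc : (Finset.Icc 1 hbar).Nonempty := ⟨1, Finset.mem_Icc.2 ⟨le_rfl, hhbar⟩⟩
  set KU := (Finset.Icc 1 hbar).sup' hsIcc (fun r => Kf (ℓ + r)) with hKUdef
  have hKUpos : 0 < KU :=
    lt_of_lt_of_le (hKfpos (ℓ + 1))
      (Finset.le_sup' (fun r => Kf (ℓ + r)) (Finset.mem_Icc.2 ⟨le_rfl, hhbar⟩))
  have hKuniform : ∀ m : ℕ, 1 ≤ m → ∀ y : H,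
      Vinf T t hbar B Q R (ℓ + m) y ≤ KU * ‖y‖ ^ 2 := by
    intro m hm y
    obtain ⟨q, hq⟩ : ∃ q, m = nu hbar m + q * hbar := by
      by_cases h : m % hbar = 0
      · have hdm := Nat.div_add_mod m hbar
        set d := m / hbar with hd
        have hmd : hbar * d = m := by omega
        have hd1 : 1 ≤ d := by
          rcases Nat.eq_zero_or_pos d with h0 | h1
          · rw [h0, Nat.mul_zero] at hmd; omega
          · exact h1
        refine ⟨d - 1, ?_⟩
        have : nu hbar m = hbar := by unfold nu; rw [if_pos h]
        rw [this]
        calc m = hbar * d := hmd.symm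
          _ = hbar + (d - 1) * hbar := by
              rw [Nat.sub_mul, Nat.one_mul]
              have : hbar ≤ d * hbar := Nat.le_mul_of_pos_left hbar hd1
              rw [Nat.mul_comm hbar d]
              omega
      · refine ⟨m / hbar, ?_⟩
        have : nu hbar m = m % hbar := by unfold nu; rw [if_neg h]
        rw [this]
        have := Nat.mod_add_div m hbar
        rw [Nat.mul_comm] at this
        omega
    have hVeq : Vinf T t hbar B Q R (ℓ + m) y = Vinf T t hbar B Q R (ℓ + nu hbar m) y := by
      conv_lhs => rw [hq]
      rw [show ℓ + (nu hbar m + q * hbar) = (ℓ + nu hbar m) + q * hbar from by ring]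
      exact Vinf_shift_mul T t hbar B Q R htper hQ.2 hR.2 _ q y
    rw [hVeq]
    exact le_trans (hKfb (ℓ + nu hbar m) y)
      (mul_le_mul_of_nonneg_right
        (Finset.le_sup' (fun r => Kf (ℓ + r)) (nu_mem hbar hhbar m)) (sq_nonneg _))
  -- bound on the impulse operators
  set cB := (Finset.Icc 1 hbar).sup' hsIcc (fun r => ‖B r‖) with hcBdef
  have hcB0 : 0 ≤ cB :=
    le_trans (norm_nonneg (B 1))
      (Finset.le_sup' (fun r => ‖B r‖) (Finset.mem_Icc.2 ⟨le_rfl, hhbar⟩))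
  have hcBle : ∀ j : ℕ, ‖B (nu hbar j)‖ ≤ cB := fun j =>
    Finset.le_sup' (fun r => ‖B r‖) (nu_mem hbar hhbar j)
  intro x0
  -- basic facts about the two optimization sets
  have hSinf_ne : {c : ℝ | ∃ u ∈ UadFrom T t hbar B ℓ x0,
      c = Jinf T t hbar B Q R ℓ x0 u}.Nonempty := by
    obtain ⟨u, hu⟩ := uad_nonempty T t hbar B htper hhbar hAd ℓ x0
    exact ⟨_, u, hu, rfl⟩
  have hVinf_nonneg : 0 ≤ Vinf T t hbar B Q R ℓ x0 := by
    refine le_csInf hSinf_ne ?_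
    rintro c ⟨u, hu, rfl⟩
    exact Jinf_nonneg T t hbar B Q R hQ0 hR0 ℓ x0 u
  have hJfin_nonneg : ∀ (k : ℕ) (u : ℕ → U), 0 ≤ Jfin T t hbar B Q R 0 ℓ k x0 u := by
    intro k u
    rw [Jfin_zero_eq]
    refine Finset.sum_nonneg fun m hm => ?_
    have hm1 : 1 ≤ m := (Finset.mem_Icc.1 hm).1
    exact add_nonneg (hQ0 _ (by omega) _) (hR0 _ (by omega) _)
  have hSfin_ne : ∀ k : ℕ, {c : ℝ | ∃ u : ℕ → U,
      Summable (fun j : ℕ => ‖u (ℓ + j + 1)‖ ^ 2)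
        ∧ c = Jfin T t hbar B Q R 0 ℓ k x0 u}.Nonempty := by
    intro k
    refine ⟨_, fun _ => 0, ?_, rfl⟩
    simpa using summable_zero
  have hSfin_bdd : ∀ k : ℕ, BddBelow {c : ℝ | ∃ u : ℕ → U,
      Summable (fun j : ℕ => ‖u (ℓ + j + 1)‖ ^ 2)
        ∧ c = Jfin T t hbar B Q R 0 ℓ k x0 u} := by
    intro k
    refine ⟨0, fun c hc => ?_⟩
    obtain ⟨u, _, rfl⟩ := hc
    exact hJfin_nonneg k u
  have hVfin_le : ∀ k : ℕ, Vfin T t hbar B Q R 0 ℓ k x0 ≤ Vinf T t hbar B Q R ℓ x0 := by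
    intro k
    refine le_csInf hSinf_ne ?_
    rintro c ⟨u, hu, rfl⟩
    refine le_trans (csInf_le (hSfin_bdd k) ⟨u, hu.1, rfl⟩) ?_
    rw [Jfin_zero_eq, stage_sum_reindex]
    exact Summable.sum_le_tsum _ (fun i _ => add_nonneg (hQ0 _ (by omega) _) (hR0 _ (by omega) _))
      (stage_summable T t hbar B Q R cQ cR (fun j hj x => (hQbd j hj x).2)
        (fun j hj x => (hRbd j hj x).2) hQ0 hR0 hu)
  -- the quantitative approximation
  rw [Metric.tendsto_atTop]
  intro ε hε
  set ε' := ε / 3 with hε'def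
  have hε' : 0 < ε' := by positivity
  set V := Vinf T t hbar B Q R ℓ x0 with hVdef
  have hVε : 0 < V + ε' := by linarith
  set A := KU * (2 * (1 + cB ^ 2)) * (V + ε') with hAdef
  have hA : 0 < A := by positivity
  obtain ⟨n0, hn0⟩ := exists_nat_gt (A / (δ * ε'))
  refine ⟨ℓ + n0 + 1, fun k hk => ?_⟩
  set n := k - ℓ with hndef
  have hn1 : 1 ≤ n := by omega
  have hnn0 : n0 ≤ n := by omega
  -- a near-optimal finite-horizon control
  have hlt : sInf {c : ℝ | ∃ u : ℕ → U,
      Summable (fun j : ℕ => ‖u (ℓ + j + 1)‖ ^ 2)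
        ∧ c = Jfin T t hbar B Q R 0 ℓ k x0 u}
      < Vfin T t hbar B Q R 0 ℓ k x0 + ε' := by
    have : Vfin T t hbar B Q R 0 ℓ k x0 = sInf _ := rfl
    linarith [hε']
  obtain ⟨c, ⟨u, husum, hceq⟩, hclt⟩ := exists_lt_of_csInf_lt (hSfin_ne k) hlt
  subst hceq
  have hJlt : Jfin T t hbar B Q R 0 ℓ k x0 u < Vfin T t hbar B Q R 0 ℓ k x0 + ε' := hclt
  set X := xtrajFrom T t hbar B ℓ x0 u with hXdef
  set G : ℕ → ℝ := fun m => ⟪Q (ℓ + m) (X m), X m⟫ + ⟪R (ℓ + m) (u (ℓ + m)), u (ℓ + m)⟫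
    with hGdef
  have hJeq : Jfin T t hbar B Q R 0 ℓ k x0 u = ∑ m ∈ Finset.Icc 1 n, G m := by
    rw [Jfin_zero_eq]
  have hGnonneg : ∀ m, 1 ≤ m → 0 ≤ G m := fun m hm =>
    add_nonneg (hQ0 _ (by omega) _) (hR0 _ (by omega) _)
  have hGcoer : ∀ m, 1 ≤ m → δ * (‖X m‖ ^ 2 + ‖u (ℓ + m)‖ ^ 2) ≤ G m := by
    intro m hm
    have h1 := (hQbd (ℓ + m) (by omega) (X m)).1
    have h2 := (hRbd (ℓ + m) (by omega) (u (ℓ + m))).1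
    have h3 : δ * ‖X m‖ ^ 2 ≤ δQ * ‖X m‖ ^ 2 :=
      mul_le_mul_of_nonneg_right (min_le_left _ _) (sq_nonneg _)
    have h4 : δ * ‖u (ℓ + m)‖ ^ 2 ≤ δR * ‖u (ℓ + m)‖ ^ 2 :=
      mul_le_mul_of_nonneg_right (min_le_right _ _) (sq_nonneg _)
    simp only [hGdef]
    nlinarith
  -- pigeonhole: some state/control pair is small
  have hIccne : (Finset.Icc 1 n).Nonempty := ⟨1, Finset.mem_Icc.2 ⟨le_rfl, hn1⟩⟩
  set csm := (V + ε') / (δ * n) with hcsmdef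
  have hδn : 0 < δ * (n : ℝ) := by
    have : (0 : ℝ) < n := by exact_mod_cast hn1
    positivity
  have hsumG : ∑ m ∈ Finset.Icc 1 n, G m < V + ε' := by
    rw [← hJeq]
    have := hVfin_le k
    linarith
  have hsumf : ∑ m ∈ Finset.Icc 1 n, (‖X m‖ ^ 2 + ‖u (ℓ + m)‖ ^ 2)
      ≤ ∑ m ∈ Finset.Icc 1 n, csm := by
    have hcard : ∑ m ∈ Finset.Icc 1 n, csm = n * csm := by
      rw [Finset.sum_const, Nat.card_Icc]
      simp [nsmul_eq_mul]
    rw [hcard]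
    have hδsum : δ * ∑ m ∈ Finset.Icc 1 n, (‖X m‖ ^ 2 + ‖u (ℓ + m)‖ ^ 2)
        ≤ ∑ m ∈ Finset.Icc 1 n, G m := by
      rw [Finset.mul_sum]
      exact Finset.sum_le_sum fun m hm => hGcoer m (Finset.mem_Icc.1 hm).1
    have hncsm : δ * ((n : ℝ) * csm) = V + ε' := by
      rw [hcsmdef]
      field_simp
    have := le_of_lt (lt_of_le_of_lt hδsum hsumG)
    rw [← hncsm] at this
    exact le_of_mul_le_mul_left this hδ
  obtain ⟨m, hmI, hmle⟩ := Finset.exists_le_of_sum_le hIccne hsumf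
  obtain ⟨hm1, hmn⟩ := Finset.mem_Icc.1 hmI
  -- the post-impulse state at step m is small
  set y := xplusFrom T t hbar B ℓ x0 u m with hydef
  have hy : y = X m + B (nu hbar (ℓ + m)) (u (ℓ + m)) := by
    obtain ⟨m', rfl⟩ : ∃ m', m = m' + 1 := ⟨m - 1, by omega⟩
    rw [hydef, hXdef]
    rw [show ℓ + (m' + 1) = ℓ + m' + 1 from rfl]
    rfl
  have hyn : ‖y‖ ≤ ‖X m‖ + cB * ‖u (ℓ + m)‖ := by
    rw [hy]
    refine le_trans (norm_add_le _ _) (add_le_add le_rfl ?_)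
    refine le_trans ((B (nu hbar (ℓ + m))).le_opNorm _) ?_
    exact mul_le_mul_of_nonneg_right (hcBle (ℓ + m)) (norm_nonneg _)
  have hy2 : ‖y‖ ^ 2 ≤ 2 * (1 + cB ^ 2) * (‖X m‖ ^ 2 + ‖u (ℓ + m)‖ ^ 2) := by
    have h1 : ‖y‖ ^ 2 ≤ (‖X m‖ + cB * ‖u (ℓ + m)‖) ^ 2 :=
      pow_le_pow_left₀ (norm_nonneg y) hyn 2
    nlinarith [sq_nonneg (‖X m‖ - cB * ‖u (ℓ + m)‖), sq_nonneg ‖X m‖,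
      sq_nonneg ‖u (ℓ + m)‖, sq_nonneg (cB * ‖u (ℓ + m)‖), sq_nonneg (cB * ‖X m‖)]
  -- dynamic programming inequality
  have hdp := dp_ineq T t hbar B Q R cQ cR htper hhbar hAd
    (fun j hj x => (hQbd j hj x).2) (fun j hj x => (hRbd j hj x).2) hQ0 hR0 ℓ m x0 u
  have hstage_le : ∑ i ∈ Finset.range m,
      (⟪Q (ℓ + i + 1) (xtrajFrom T t hbar B ℓ x0 u (i + 1)),
          xtrajFrom T t hbar B ℓ x0 u (i + 1)⟫
        + ⟪R (ℓ + i + 1) (u (ℓ + i + 1)), u (ℓ + i + 1)⟫)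
      < Vfin T t hbar B Q R 0 ℓ k x0 + ε' := by
    rw [← stage_sum_reindex]
    refine lt_of_le_of_lt ?_ hJlt
    rw [Jfin_zero_eq]
    refine Finset.sum_le_sum_of_subset_of_nonneg ?_ ?_
    · exact Finset.Icc_subset_Icc le_rfl hmn
    · intro i hi _
      have : 1 ≤ i := (Finset.mem_Icc.1 hi).1
      exact add_nonneg (hQ0 _ (by omega) _) (hR0 _ (by omega) _)
  have hVy : Vinf T t hbar B Q R (ℓ + m) y ≤ KU * ‖y‖ ^ 2 := hKuniform m hm1 y
  have htail : KU * ‖y‖ ^ 2 ≤ ε' := by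
    have h1 : KU * ‖y‖ ^ 2 ≤ KU * (2 * (1 + cB ^ 2) * csm) := by
      have h2 : ‖y‖ ^ 2 ≤ 2 * (1 + cB ^ 2) * csm := by
        refine le_trans hy2 ?_
        have h3 : (0 : ℝ) ≤ 2 * (1 + cB ^ 2) := by positivity
        exact mul_le_mul_of_nonneg_left hmle h3
      exact mul_le_mul_of_nonneg_left h2 (le_of_lt hKUpos)
    have hAc : KU * (2 * (1 + cB ^ 2) * csm) = A / (δ * n) := by
      rw [hAdef, hcsmdef]
      field_simp
    rw [hAc] at h1
    refine le_trans h1 ?_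
    have hn0n : (n0 : ℝ) ≤ n := by exact_mod_cast hnn0
    have hAn : A / (δ * ε') < (n : ℝ) := lt_of_lt_of_le hn0 hn0n
    have hδε : 0 < δ * ε' := by positivity
    rw [div_lt_iff₀ hδε] at hAn
    rw [div_le_iff₀ hδn]
    nlinarith
  -- conclude
  have hmain : V < Vfin T t hbar B Q R 0 ℓ k x0 + ε' + ε' := by
    calc V ≤ _ + Vinf T t hbar B Q R (ℓ + m) y := hdp
      _ < (Vfin T t hbar B Q R 0 ℓ k x0 + ε') + ε' := by
          have := le_trans hVy htail
          linarith [hstage_le]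
  have hle := hVfin_le k
  rw [Real.dist_eq, abs_sub_lt_iff]
  constructor
  · linarith
  · have : ε' + ε' < ε := by rw [hε'def]; linarith
    linarith


end ImpulseControl
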